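/- Fix K, N_in ≥ 1 and a depth L ≥ 1, and let f_θ : ℝ^{N_in} → ℝ be the scalar function computed by a switch-type neural network: z^(0) = x, z^(l)_i = min(N, max(0, Σ_j exp(W^(l)_{ij}) z^(l-1)_j + b^(l)_i)) for l = 1, …, L−1, and f_θ(x) = Σ_j exp(w^(L)_j) z^(L-1)_j + b^(L), for an arbitrary choice of parameters θ = {(W^(l), b^(l))} and bound N > 0. Define the policy π_θ on states s = (s_1, …, s_K) ∈ (ℝ^{N_in})^K by π_θ(i|s) = exp(f_θ(s_i)) / Σ_{j=1}^{K} exp(f_θ(s_j)). Then for every choice of parameters θ, π_θ is a stochastic switch-type policy: for every state s, index i, and vector b ∈ ℝ^{N_in} with all coordinates strictly positive, the state s' with s'_i = s_i + b and s'_k = s_k for k ≠ i satisfies π_θ(i|s') ≥ π_θ(i|s). -/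
import Mathlib


/-- The stack of the first `l` monotonic hidden layers of a switch-type neural
network: layer `l+1` applies the exponentiated-weight linear unit with weight matrix
`W l` and bias `bv l` to the output of the first `l` layers, followed by the ReLU-N
activation `σ_RN(x) = min(N, max(0, x))` componentwise. `stnHidden d W bv N 0 x = x`. -/
noncomputable def stnHidden (d : ℕ → ℕ)
    (W : (l : ℕ) → Fin (d (l + 1)) → Fin (d l) → ℝ)
    (bv : (l : ℕ) → Fin (d (l + 1)) → ℝ)
    (N : ℝ) : (l : ℕ) → (Fin (d 0) → ℝ) → Fin (d l) → ℝ
  | 0, x => x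
  | l + 1, x => fun i =>
      min N (max 0 (∑ j, Real.exp (W l i j) * stnHidden d W bv N l x j + bv l i))

/-- The scalar function `f_θ` computed by a switch-type neural network with depth `L`:
`L−1` monotonic hidden layers followed by a final exponentiated-weight affine output
layer with weight vector `w` and scalar bias `bL`. -/
noncomputable def stnScalar (L : ℕ) (d : ℕ → ℕ)
    (W : (l : ℕ) → Fin (d (l + 1)) → Fin (d l) → ℝ)
    (bv : (l : ℕ) → Fin (d (l + 1)) → ℝ)
    (w : Fin (d (L - 1)) → ℝ) (bL : ℝ)
    (N : ℝ) (x : Fin (d 0) → ℝ) : ℝ :=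
  (∑ j, Real.exp (w j) * stnHidden d W bv N (L - 1) x j) + bL

lemma stnHidden_mono (d : ℕ → ℕ)
    (W : (l : ℕ) → Fin (d (l + 1)) → Fin (d l) → ℝ)
    (bv : (l : ℕ) → Fin (d (l + 1)) → ℝ) (N : ℝ)
    (x y : Fin (d 0) → ℝ) (hxy : ∀ j, x j ≤ y j) :
    ∀ l j, stnHidden d W bv N l x j ≤ stnHidden d W bv N l y j := by
  intro l
  induction l with
  | zero => exact hxy
  | succ l ih =>
    intro j
    simp only [stnHidden]
    refine min_le_min le_rfl (max_le_max le_rfl (add_le_add ?_ le_rfl))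
    exact Finset.sum_le_sum fun k _ =>
      mul_le_mul_of_nonneg_left (ih k) (Real.exp_pos _).le

/-- For every choice of parameters `θ`, the STN policy
`π_θ(i|s) = exp(f_θ(sᵢ)) / ∑ⱼ exp(f_θ(sⱼ))` obtained by applying the shared scalar
STN head `f_θ` to each component state and then softmax, is a stochastic switch-type
policy: increasing the `i`-th component state by a strictly positive vector `b` does
not decrease the probability of action `i`. -/
theorem stn_policy_is_stochastic_switch_type
    (K Nin : ℕ) (hK : 0 < K) (hNin : 0 < Nin)
    (L : ℕ) (hL : 1 ≤ L) (d : ℕ → ℕ) (hd0 : d 0 = Nin)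
    (W : (l : ℕ) → Fin (d (l + 1)) → Fin (d l) → ℝ)
    (bv : (l : ℕ) → Fin (d (l + 1)) → ℝ)
    (w : Fin (d (L - 1)) → ℝ) (bL : ℝ)
    (N : ℝ) (hN : 0 < N)
    (s s' : Fin K → Fin (d 0) → ℝ) (i : Fin K)
    (b : Fin (d 0) → ℝ) (hb : ∀ j, 0 < b j)
    (hs'i : s' i = s i + b)
    (hs'k : ∀ k, k ≠ i → s' k = s k) :
    Real.exp (stnScalar L d W bv w bL N (s' i)) /
        ∑ j, Real.exp (stnScalar L d W bv w bL N (s' j)) ≥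
      Real.exp (stnScalar L d W bv w bL N (s i)) /
        ∑ j, Real.exp (stnScalar L d W bv w bL N (s j)) := by
  set f : (Fin (d 0) → ℝ) → ℝ := stnScalar L d W bv w bL N with hf
  have hmono : f (s i) ≤ f (s' i) := by
    refine add_le_add ?_ le_rfl
    refine Finset.sum_le_sum fun k _ =>
      mul_le_mul_of_nonneg_left ?_ (Real.exp_pos _).le
    refine stnHidden_mono d W bv N (s i) (s' i) (fun j => ?_) _ k
    rw [hs'i]; simp [le_of_lt (hb j)]
  set S : ℝ := ∑ j ∈ Finset.univ.erase i, Real.exp (f (s j)) with hS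
  have hSeq : ∑ j ∈ Finset.univ.erase i, Real.exp (f (s' j)) = S := by
    refine Finset.sum_congr rfl fun k hk => ?_
    rw [hs'k k (Finset.mem_erase.mp hk).1]
  have hsum : ∑ j, Real.exp (f (s j)) = Real.exp (f (s i)) + S := by
    exact (Finset.add_sum_erase _ _ (Finset.mem_univ i)).symm
  have hsum' : ∑ j, Real.exp (f (s' j)) = Real.exp (f (s' i)) + S := by
    rw [← hSeq]; exact (Finset.add_sum_erase _ _ (Finset.mem_univ i)).symm
  have hSnn : 0 ≤ S := Finset.sum_nonneg fun _ _ => (Real.exp_pos _).le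
  have hA := Real.exp_pos (f (s i))
  have hA' := Real.exp_pos (f (s' i))
  have hAle : Real.exp (f (s i)) ≤ Real.exp (f (s' i)) := Real.exp_le_exp.mpr hmono
  rw [hsum, hsum', ge_iff_le, div_le_div_iff₀ (by positivity) (by positivity)]
  nlinarith
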